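/- For a binary symmetric source (X uniform on {0,1}) with Hamming distortion, and 0 ≤ D_{12} ≤ D_1 ≤ 1/2, the minimum side distortion of the second description in an optimal scalable code, D*_{2}(D_1, D_{12}), equals 1/2 + D_{12} − D_1. Concretely: over all finite random variables X_1, X_2 jointly distributed with X and functions g_1, g_2 such that X_1 ⟂ X_2, I(X;X_1) = 1 − H_b(D_1), I(X; X_1, X_2) = 1 − H_b(D_{12}), E[d(X,X_1)] ≤ D_1, and E[d(X, g_2(X_1,X_2))] ≤ D_{12}, the minimum of E[d(X, g_1(X_2))] equals 1/2 + D_{12} − D_1. -/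

import Mathlib

open scoped BigOperators

namespace MDC

structure FinProb (Ω : Type*) [Fintype Ω] where
  μ : Ω → ℝ
  nonneg : ∀ ω, 0 ≤ μ ω
  sum_one : ∑ ω, μ ω = 1

variable {Ω : Type*} [Fintype Ω]

/-- Probability that the random variable `f` takes the value `a`. -/
noncomputable def pr (P : FinProb Ω) {A : Type*} [DecidableEq A] (f : Ω → A) (a : A) : ℝ :=
  ∑ ω, if f ω = a then P.μ ω else 0

/-- Shannon entropy (base 2) of a finite random variable. -/
noncomputable def H (P : FinProb Ω) {A : Type*} [Fintype A] [DecidableEq A] (f : Ω → A) : ℝ :=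
  - ∑ a, pr P f a * Real.logb 2 (pr P f a)

/-- Conditional entropy H(f|g). -/
noncomputable def Hcond (P : FinProb Ω) {A B : Type*} [Fintype A] [DecidableEq A]
    [Fintype B] [DecidableEq B] (f : Ω → A) (g : Ω → B) : ℝ :=
  H P (fun ω => (f ω, g ω)) - H P g

/-- Mutual information I(f;g). -/
noncomputable def MI (P : FinProb Ω) {A B : Type*} [Fintype A] [DecidableEq A]
    [Fintype B] [DecidableEq B] (f : Ω → A) (g : Ω → B) : ℝ :=
  H P f + H P g - H P (fun ω => (f ω, g ω))

/-- Conditional mutual information I(f;g|h). -/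
noncomputable def CMI (P : FinProb Ω) {A B C : Type*} [Fintype A] [DecidableEq A]
    [Fintype B] [DecidableEq B] [Fintype C] [DecidableEq C]
    (f : Ω → A) (g : Ω → B) (h : Ω → C) : ℝ :=
  H P (fun ω => (f ω, h ω)) + H P (fun ω => (g ω, h ω))
    - H P (fun ω => (f ω, g ω, h ω)) - H P h

/-- Independence of two finite random variables. -/
def Indep (P : FinProb Ω) {A B : Type*} [DecidableEq A] [DecidableEq B]
    (f : Ω → A) (g : Ω → B) : Prop :=
  ∀ a b, pr P (fun ω => (f ω, g ω)) (a, b) = pr P f a * pr P g b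

/-- Conditional independence of `f` and `g` given `h` (a Markov chain f − h − g). -/
def CondIndep (P : FinProb Ω) {A B C : Type*} [DecidableEq A] [DecidableEq B] [DecidableEq C]
    (f : Ω → A) (g : Ω → B) (h : Ω → C) : Prop :=
  ∀ a b c, pr P h c * pr P (fun ω => (f ω, g ω, h ω)) (a, b, c) =
    pr P (fun ω => (f ω, h ω)) (a, c) * pr P (fun ω => (g ω, h ω)) (b, c)

/-- Binary entropy function. -/
noncomputable def Hb (p : ℝ) : ℝ := -(p * Real.logb 2 p) - (1 - p) * Real.logb 2 (1 - p)

/-- Expected Hamming distortion between two random variables. -/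
noncomputable def Edist (P : FinProb Ω) {A : Type*} [DecidableEq A] (f g : Ω → A) : ℝ :=
  ∑ ω, P.μ ω * (if f ω = g ω then 0 else 1)

end MDC

/-! Writing `H(X | W) = ∑_w (negMulLog e_w + negMulLog c_w - negMulLog (e_w + c_w)) / log 2`,
where `e_w`, `c_w` are the masses of `{X ≠ k w, W = w}` and `{X = k w, W = w}` for a decoder `k`,
Gibbs' inequality bounds the cell `w` by `(e_w + c_w) Hb(t) + slope · (e_w - t (e_w + c_w))`
with a slope `log ((1 - t) / t) ≥ 0` for `t ≤ 1/2`. Summing, `H(X | W) = Hb(t)` together with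
`P(X ≠ k(W)) ≤ t` forces equality in every cell: the decoder errs with probability exactly `t`
on each cell.

Applied to the joint decoder `g2`, every cell `w = (x1, x2)` carries mass at least
`D12 · P(W = w)` on both values of `X`; applied to `X1` itself (when `D1 < 1/2`), `X1` must be
uniform. With `X1 ⟂ X2`, in half of the `X1`-mass `g1(X2)` disagrees with `X1` and errs where `X1`
is right, in the other half it agrees with `X1` and errs with it; counting gives
`P(g1(X2) ≠ X) ≥ 1/2 + 2 · D12 · 1/2 - D1`.

The bound is attained by time sharing, with weights `a`, `b` such that `a D12 + b / 2 = D1`,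
between a second description that is a fair coin independent of `(X, X1)` and one that describes
`X` through a binary symmetric channel, independently of `X1`. -/

namespace MDC

open Real InformationTheory

noncomputable def splitEntropy (e c : ℝ) : ℝ := negMulLog e + negMulLog c - negMulLog (e + c)

lemma splitEntropy_mul_mul_one_sub (t s : ℝ) :
    splitEntropy (t * s) ((1 - t) * s) = s * binEntropy t := by
  rw [splitEntropy, negMulLog_mul, negMulLog_mul, ← add_mul, add_sub_cancel,
    one_mul, binEntropy_eq_negMulLog_add_negMulLog_one_sub]
  ring

lemma mul_log_div_eq {e u : ℝ} (hu : u ≠ 0) : e * log (e / u) = e * log e - e * log u := by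
  rcases eq_or_ne e 0 with rfl | he
  · simp
  · rw [log_div he hu]; ring

/-- Gibbs' inequality with its defect written out: the two `klFun` terms add up to the
Kullback–Leibler divergence of `(e, c)` from `(t (e + c), (1 - t) (e + c))`. -/
lemma splitEntropy_add_klFun {e c t : ℝ} (he : 0 ≤ e) (hc : 0 ≤ c) (ht0 : 0 < t)
    (ht1 : t < 1) :
    splitEntropy e c + t * (e + c) * klFun (e / (t * (e + c)))
        + (1 - t) * (e + c) * klFun (c / ((1 - t) * (e + c)))
      = (e + c) * binEntropy t + log ((1 - t) / t) * (e - t * (e + c)) := by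
  rcases (add_nonneg he hc).eq_or_lt with hs | hs
  · obtain ⟨rfl, rfl⟩ : e = 0 ∧ c = 0 := ⟨by linarith, by linarith⟩
    simp [splitEntropy]
  have h1t : 1 - t ≠ 0 := (sub_pos.2 ht1).ne'
  have hu : t * (e + c) ≠ 0 := by positivity
  have hv : (1 - t) * (e + c) ≠ 0 := mul_ne_zero h1t hs.ne'
  have hku : t * (e + c) * klFun (e / (t * (e + c)))
      = e * log e - e * log t - e * log (e + c) + t * (e + c) - e := by
    have : t * (e + c) * klFun (e / (t * (e + c)))
        = e * log (e / (t * (e + c))) + t * (e + c) - e := by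
      rw [klFun]; field_simp
    rw [this, mul_log_div_eq hu, log_mul ht0.ne' hs.ne']
    ring
  have hkv : (1 - t) * (e + c) * klFun (c / ((1 - t) * (e + c)))
      = c * log c - c * log (1 - t) - c * log (e + c) + (1 - t) * (e + c) - c := by
    have : (1 - t) * (e + c) * klFun (c / ((1 - t) * (e + c)))
        = c * log (c / ((1 - t) * (e + c))) + (1 - t) * (e + c) - c := by
      rw [klFun]; field_simp
    rw [this, mul_log_div_eq hv, log_mul h1t hs.ne']
    ring
  rw [hku, hkv, splitEntropy, binEntropy_eq_negMulLog_add_negMulLog_one_sub,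
    log_div h1t ht0.ne']
  simp only [negMulLog]
  ring

theorem eq_mul_of_sum_splitEntropy_eq {B : Type*} [Fintype B] (e c : B → ℝ) {t : ℝ}
    (he : ∀ w, 0 ≤ e w) (hc : ∀ w, 0 ≤ c w) (hsum : ∑ w, (e w + c w) = 1)
    (hH : ∑ w, splitEntropy (e w) (c w) = binEntropy t) (hE : ∑ w, e w ≤ t)
    (ht0 : 0 ≤ t) (ht : t ≤ 1 / 2) (w : B) :
    e w = t * (e w + c w) := by
  rcases ht0.eq_or_lt with rfl | ht0
  · have := (Finset.sum_eq_zero_iff_of_nonneg fun w _ => he w).1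
      (le_antisymm hE (Finset.sum_nonneg fun w _ => he w)) w (Finset.mem_univ w)
    simp [this]
  have hs : ∀ w, 0 ≤ e w + c w := fun w => add_nonneg (he w) (hc w)
  set ku : B → ℝ := fun w => t * (e w + c w) * klFun (e w / (t * (e w + c w)))
  set kv : B → ℝ := fun w => (1 - t) * (e w + c w) * klFun (c w / ((1 - t) * (e w + c w)))
  have hku : ∀ w, 0 ≤ ku w := fun w =>
    have hu : 0 ≤ t * (e w + c w) := mul_nonneg ht0.le (hs w)
    mul_nonneg hu (klFun_nonneg (div_nonneg (he w) hu))
  have hkv : ∀ w, 0 ≤ kv w := fun w =>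
    have hv : 0 ≤ (1 - t) * (e w + c w) := mul_nonneg (by linarith) (hs w)
    mul_nonneg hv (klFun_nonneg (div_nonneg (hc w) hv))
  have hslope : 0 ≤ log ((1 - t) / t) := log_nonneg (by rw [le_div_iff₀ ht0]; linarith)
  have htotal : ∑ w, (ku w + kv w) ≤ 0 := by
    have hid := Finset.sum_congr rfl fun w (_ : w ∈ Finset.univ) =>
      splitEntropy_add_klFun (he w) (hc w) ht0 (by linarith)
    simp only [add_assoc, Finset.sum_add_distrib, ← Finset.sum_mul, ← Finset.mul_sum,
      Finset.sum_sub_distrib, hsum, hH] at hid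
    simp only [ku, kv, Finset.sum_add_distrib]
    linarith [mul_nonpos_of_nonneg_of_nonpos hslope (by linarith : ∑ w, e w - t * 1 ≤ 0)]
  have hzero := (Finset.sum_eq_zero_iff_of_nonneg fun w _ => add_nonneg (hku w) (hkv w)).1
    (le_antisymm htotal (Finset.sum_nonneg fun w _ => add_nonneg (hku w) (hkv w))) w
    (Finset.mem_univ w)
  have hkuw : ku w = 0 := by linarith [hku w, hkv w]
  rcases (hs w).eq_or_lt with hsw | hsw
  · rw [← hsw]; linarith [he w, hc w]
  have hpos : 0 < t * (e w + c w) := mul_pos ht0 hsw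
  have := (klFun_eq_zero_iff (div_nonneg (he w) hpos.le)).1
    ((mul_eq_zero.1 hkuw).resolve_left hpos.ne')
  rwa [div_eq_one_iff_eq hpos.ne'] at this

lemma sum_fin_two_eq_rev_add {M : Type*} [AddCommMonoid M] (f : Fin 2 → M) (a : Fin 2) :
    ∑ x, f x = f a.rev + f a := by
  fin_cases a <;> simp [Fin.sum_univ_two, add_comm]

lemma fin_two_rev_ne (a : Fin 2) : a.rev ≠ a := by
  fin_cases a <;> decide

lemma fin_two_eq_rev_of_ne {y a : Fin 2} (h : y ≠ a) : y = a.rev := by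
  fin_cases y <;> fin_cases a <;> simp_all

variable {Ω : Type*} [Fintype Ω]

section Basic

variable (P : FinProb Ω)

lemma pr_nonneg {A : Type*} [DecidableEq A] (f : Ω → A) (a : A) : 0 ≤ pr P f a :=
  Finset.sum_nonneg fun ω _ => by split_ifs <;> simp [P.nonneg ω]

lemma sum_pr_mul {A : Type*} [Fintype A] [DecidableEq A] (f : Ω → A) (F : A → ℝ) :
    ∑ a, pr P f a * F a = ∑ ω, P.μ ω * F (f ω) := by
  simp only [pr, Finset.sum_mul, ite_mul, zero_mul]
  rw [Finset.sum_comm]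
  simp

lemma sum_pr {A : Type*} [Fintype A] [DecidableEq A] (f : Ω → A) : ∑ a, pr P f a = 1 := by
  simpa [P.sum_one] using sum_pr_mul P f 1

lemma sum_pr_pair_fst {A B : Type*} [Fintype A] [DecidableEq A] [DecidableEq B]
    (f : Ω → A) (g : Ω → B) (b : B) :
    ∑ a, pr P (fun ω => (f ω, g ω)) (a, b) = pr P g b := by
  simp only [pr, Prod.ext_iff]
  rw [Finset.sum_comm]
  refine Finset.sum_congr rfl fun ω _ => ?_
  by_cases h : g ω = b <;> simp [h]

lemma sum_pr_pair_snd {A B : Type*} [DecidableEq A] [Fintype B] [DecidableEq B]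
    (f : Ω → A) (g : Ω → B) (a : A) :
    ∑ b, pr P (fun ω => (f ω, g ω)) (a, b) = pr P f a := by
  simp only [pr, Prod.ext_iff]
  rw [Finset.sum_comm]
  refine Finset.sum_congr rfl fun ω _ => ?_
  by_cases h : f ω = a <;> simp [h]

lemma H_eq_sum_negMulLog {A : Type*} [Fintype A] [DecidableEq A] (f : Ω → A) :
    H P f = (∑ a, negMulLog (pr P f a)) / log 2 := by
  simp only [H, negMulLog, logb, Finset.sum_div]
  rw [← Finset.sum_neg_distrib]
  congr 1 with a
  ring

lemma Hb_eq_binEntropy (t : ℝ) : Hb t = binEntropy t / log 2 := by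
  rw [Hb, binEntropy_eq_negMulLog_add_negMulLog_one_sub, negMulLog, negMulLog, logb, logb]
  ring

lemma MI_eq_H_sub_Hcond {A B : Type*} [Fintype A] [DecidableEq A] [Fintype B] [DecidableEq B]
    (f : Ω → A) (g : Ω → B) : MI P f g = H P f - Hcond P f g := by
  rw [MI, Hcond]; ring

lemma H_eq_one_of_uniform {X : Ω → Fin 2} (hX : ∀ x, pr P X x = 1 / 2) : H P X = 1 := by
  rw [H, Fin.sum_univ_two, hX, hX, one_div, logb_inv, logb_self_eq_one one_lt_two]
  ring

lemma pr_pair_rev_add_pr_pair (X : Ω → Fin 2) {B : Type*} [DecidableEq B] (W : Ω → B)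
    (a : Fin 2) (w : B) :
    pr P (fun ω => (X ω, W ω)) (a.rev, w) + pr P (fun ω => (X ω, W ω)) (a, w) = pr P W w := by
  rw [← sum_pr_pair_fst P X W w, sum_fin_two_eq_rev_add _ a]

section BinarySource

variable (X : Ω → Fin 2) {B : Type*} [Fintype B] [DecidableEq B] (W : Ω → B)

lemma Hcond_eq_sum_splitEntropy (k : B → Fin 2) :
    Hcond P X W = (∑ w, splitEntropy (pr P (fun ω => (X ω, W ω)) ((k w).rev, w))
      (pr P (fun ω => (X ω, W ω)) (k w, w))) / log 2 := by
  rw [Hcond, H_eq_sum_negMulLog, H_eq_sum_negMulLog, ← sub_div, Fintype.sum_prod_type,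
    Finset.sum_comm, ← Finset.sum_sub_distrib]
  congr 1
  refine Finset.sum_congr rfl fun w _ => ?_
  rw [sum_fin_two_eq_rev_add _ (k w), ← pr_pair_rev_add_pr_pair P X W (k w) w, splitEntropy]

lemma Edist_comp_eq_sum (k : B → Fin 2) :
    Edist P X (fun ω => k (W ω)) = ∑ w, pr P (fun ω => (X ω, W ω)) ((k w).rev, w) := by
  rw [Edist, ← sum_pr_mul P (fun ω => (X ω, W ω)) (fun p => if p.1 = k p.2 then 0 else 1),
    Fintype.sum_prod_type, Finset.sum_comm]
  refine Finset.sum_congr rfl fun w _ => ?_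
  simp [sum_fin_two_eq_rev_add _ (k w), fin_two_rev_ne]

variable {X W}

lemma pr_pair_rev_eq_of_Hcond_eq {k : B → Fin 2} {t : ℝ} (hH : Hcond P X W = Hb t)
    (hE : Edist P X (fun ω => k (W ω)) ≤ t) (ht0 : 0 ≤ t) (ht : t ≤ 1 / 2) (w : B) :
    pr P (fun ω => (X ω, W ω)) ((k w).rev, w) = t * pr P W w := by
  rw [Hcond_eq_sum_splitEntropy P X W k, Hb_eq_binEntropy,
    div_left_inj' (log_pos one_lt_two).ne'] at hH
  rw [Edist_comp_eq_sum] at hE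
  have hsum : ∑ w, (pr P (fun ω => (X ω, W ω)) ((k w).rev, w)
      + pr P (fun ω => (X ω, W ω)) (k w, w)) = 1 := by
    simp only [pr_pair_rev_add_pr_pair, sum_pr]
  have := eq_mul_of_sum_splitEntropy_eq _ _ (fun w => pr_nonneg _ _ _) (fun w => pr_nonneg _ _ _)
    hsum hH hE ht0 ht w
  rwa [pr_pair_rev_add_pr_pair] at this

lemma Hcond_eq_Hb_of_pr_pair_rev_eq {k : B → Fin 2} {t : ℝ}
    (h : ∀ w, pr P (fun ω => (X ω, W ω)) ((k w).rev, w) = t * pr P W w) :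
    Hcond P X W = Hb t := by
  have hc : ∀ w, pr P (fun ω => (X ω, W ω)) (k w, w) = (1 - t) * pr P W w := fun w => by
    linarith [pr_pair_rev_add_pr_pair P X W (k w) w, h w]
  simp only [Hcond_eq_sum_splitEntropy P X W k, Hb_eq_binEntropy, h, hc,
    splitEntropy_mul_mul_one_sub, ← Finset.sum_mul, sum_pr, one_mul]

end BinarySource

lemma mul_le_pr_pair_of_pr_pair_rev_eq {X : Ω → Fin 2} {B : Type*} [DecidableEq B] {W : Ω → B}
    {a : Fin 2} {w : B} {t : ℝ} (h : pr P (fun ω => (X ω, W ω)) (a.rev, w) = t * pr P W w)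
    (ht : t ≤ 1 / 2) (y : Fin 2) : t * pr P W w ≤ pr P (fun ω => (X ω, W ω)) (y, w) := by
  rcases eq_or_ne y a with rfl | hy
  · nlinarith [pr_pair_rev_add_pr_pair P X W y w, pr_nonneg P W w]
  · rw [fin_two_eq_rev_of_ne hy, h]

end Basic

structure IsScalableCode (P : FinProb Ω) (X X1 : Ω → Fin 2) {B : Type*} [Fintype B]
    [DecidableEq B] (X2 : Ω → B) (g2 : Fin 2 → B → Fin 2) (D1 D12 : ℝ) : Prop where
  uniform : ∀ x, pr P X x = 1 / 2
  indep : Indep P X1 X2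
  mi_fst : MI P X X1 = 1 - Hb D1
  mi_pair : MI P X (fun ω => (X1 ω, X2 ω)) = 1 - Hb D12
  edist_fst : Edist P X X1 ≤ D1
  edist_pair : Edist P X (fun ω => g2 (X1 ω) (X2 ω)) ≤ D12

section Converse

variable {P : FinProb Ω}

lemma uniform_of_pr_pair_rev_eq {X X1 : Ω → Fin 2} {D1 : ℝ} (hX : ∀ x, pr P X x = 1 / 2)
    (h : ∀ a, pr P (fun ω => (X ω, X1 ω)) (a.rev, a) = D1 * pr P X1 a) (hD1 : D1 < 1 / 2)
    (a : Fin 2) : pr P X1 a = 1 / 2 := by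
  have hsum : pr P X1 0 + pr P X1 1 = 1 := by rw [← Fin.sum_univ_two, sum_pr]
  have hX0 := sum_pr_pair_snd P X X1 0
  rw [Fin.sum_univ_two, hX] at hX0
  have hc0 : pr P (fun ω => (X ω, X1 ω)) (1, 0) + pr P (fun ω => (X ω, X1 ω)) (0, 0)
      = pr P X1 0 := pr_pair_rev_add_pr_pair P X X1 0 0
  have he0 : pr P (fun ω => (X ω, X1 ω)) (1, 0) = D1 * pr P X1 0 := h 0
  have he1 : pr P (fun ω => (X ω, X1 ω)) (0, 1) = D1 * pr P X1 1 := h 1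
  have h0 : pr P X1 0 = 1 / 2 := by
    have : (1 - 2 * D1) * (pr P X1 0 - 1 / 2) = 0 := by
      linear_combination hX0 - hc0 + he0 - he1 - D1 * hsum
    linarith [(mul_eq_zero.1 this).resolve_left (by linarith)]
  fin_cases a
  · exact h0
  · simp only [Fin.mk_one, Fin.isValue]; linarith

variable {B : Type*} [Fintype B] [DecidableEq B]

lemma le_edist_of_uniform_of_indep {X X1 : Ω → Fin 2} {X2 : Ω → B} {D1 D12 : ℝ}
    (hX1 : ∀ a, pr P X1 a = 1 / 2) (hind : Indep P X1 X2)
    (hlow : ∀ y w, D12 * pr P (fun ω => (X1 ω, X2 ω)) w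
      ≤ pr P (fun ω => (X ω, X1 ω, X2 ω)) (y, w))
    (hE1 : Edist P X X1 ≤ D1) (g1 : B → Fin 2) :
    1 / 2 + D12 - D1 ≤ Edist P X (fun ω => g1 (X2 ω)) := by
  set W := fun ω => (X1 ω, X2 ω)
  set q := pr P (fun ω => (X ω, W ω))
  replace hE1 : ∑ w, q (w.1.rev, w) ≤ D1 :=
    (Edist_comp_eq_sum P X W fun w => w.1).symm.trans_le hE1
  have hpoint : ∀ w : Fin 2 × B, (if w.1 = g1 w.2 then 2 * D12 else 1) * pr P W w
      - q (w.1.rev, w) ≤ q ((g1 w.2).rev, w) := by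
    intro w
    by_cases hw : w.1 = g1 w.2
    · rw [if_pos hw, ← hw]; linarith [hlow w.1.rev w]
    · rw [if_neg hw, fin_two_eq_rev_of_ne hw, Fin.rev_rev]
      linarith [pr_pair_rev_add_pr_pair P X W (g1 w.2) w]
  have hweights : ∑ w : Fin 2 × B, (if w.1 = g1 w.2 then 2 * D12 else 1) * pr P W w
      = D12 + 1 / 2 := by
    have hW : ∀ w : Fin 2 × B, pr P W w = 1 / 2 * pr P X2 w.2 := fun w => by
      rw [← hX1 w.1]; exact hind w.1 w.2
    have hinner : ∀ b, ∑ a : Fin 2, (if a = g1 b then 2 * D12 else 1) * (1 / 2 * pr P X2 b)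
        = (D12 + 1 / 2) * pr P X2 b := fun b => by
      rw [sum_fin_two_eq_rev_add _ (g1 b), if_neg (fin_two_rev_ne _), if_pos rfl]; ring
    simp only [hW, Fintype.sum_prod_type]
    rw [Finset.sum_comm, Finset.sum_congr rfl fun b _ => hinner b, ← Finset.mul_sum, sum_pr,
      mul_one]
  have := Finset.sum_le_sum fun w (_ : w ∈ Finset.univ) => hpoint w
  rw [Finset.sum_sub_distrib, hweights] at this
  calc 1 / 2 + D12 - D1 ≤ ∑ w, q ((g1 w.2).rev, w) := by linarith
    _ = Edist P X (fun ω => g1 (X2 ω)) := (Edist_comp_eq_sum P X W fun w => g1 w.2).symm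

theorem IsScalableCode.le_edist {X X1 : Ω → Fin 2} {X2 : Ω → B} {g2 : Fin 2 → B → Fin 2}
    {D1 D12 : ℝ} (hc : IsScalableCode P X X1 X2 g2 D1 D12) (g1 : B → Fin 2)
    (h0 : 0 ≤ D12) (h1 : D12 ≤ D1) (h2 : D1 ≤ 1 / 2) :
    1 / 2 + D12 - D1 ≤ Edist P X (fun ω => g1 (X2 ω)) := by
  set W := fun ω => (X1 ω, X2 ω)
  have hH := H_eq_one_of_uniform P hc.uniform
  have hmi_fst := hc.mi_fst
  have hmi_pair := hc.mi_pair
  rw [MI_eq_H_sub_Hcond, hH] at hmi_fst hmi_pair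
  have herr_pair : ∀ w, pr P (fun ω => (X ω, W ω)) ((g2 w.1 w.2).rev, w) = D12 * pr P W w :=
    pr_pair_rev_eq_of_Hcond_eq P (k := fun w : Fin 2 × B => g2 w.1 w.2) (by linarith)
      hc.edist_pair h0 (h1.trans h2)
  have hlow : ∀ y w, D12 * pr P W w ≤ pr P (fun ω => (X ω, W ω)) (y, w) := fun y w =>
    mul_le_pr_pair_of_pr_pair_rev_eq P (herr_pair w) (h1.trans h2) y
  rcases h2.eq_or_lt with rfl | hD1
  · calc 1 / 2 + D12 - 1 / 2 = ∑ w, D12 * pr P W w := by rw [← Finset.mul_sum, sum_pr]; ring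
      _ ≤ ∑ w, pr P (fun ω => (X ω, W ω)) ((g1 w.2).rev, w) :=
        Finset.sum_le_sum fun w _ => hlow _ w
      _ = Edist P X (fun ω => g1 (X2 ω)) := (Edist_comp_eq_sum P X W fun w => g1 w.2).symm
  · have herr_fst : ∀ a, pr P (fun ω => (X ω, X1 ω)) (a.rev, a) = D1 * pr P X1 a :=
      pr_pair_rev_eq_of_Hcond_eq P (k := id) (by linarith) hc.edist_fst (h0.trans h1) h2
    exact le_edist_of_uniform_of_indep (uniform_of_pr_pair_rev_eq hc.uniform herr_fst hD1)
      hc.indep hlow hc.edist_fst g1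

end Converse

section Transfer

variable {Ω' : Type*} [Fintype Ω']

def FinProb.mapEquiv (P : FinProb Ω) (e : Ω ≃ Ω') : FinProb Ω' where
  μ ω' := P.μ (e.symm ω')
  nonneg _ := P.nonneg _
  sum_one := (e.symm.sum_comp P.μ).trans P.sum_one

variable (P : FinProb Ω) (e : Ω ≃ Ω')

lemma pr_mapEquiv {A : Type*} [DecidableEq A] (f : Ω → A) (a : A) :
    pr (P.mapEquiv e) (f ∘ e.symm) a = pr P f a :=
  e.symm.sum_comp fun ω => if f ω = a then P.μ ω else 0

lemma H_mapEquiv {A : Type*} [Fintype A] [DecidableEq A] (f : Ω → A) :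
    H (P.mapEquiv e) (f ∘ e.symm) = H P f := by
  simp only [H, pr_mapEquiv]

lemma MI_mapEquiv {A B : Type*} [Fintype A] [DecidableEq A] [Fintype B] [DecidableEq B]
    (f : Ω → A) (g : Ω → B) : MI (P.mapEquiv e) (f ∘ e.symm) (g ∘ e.symm) = MI P f g := by
  rw [MI, MI, H_mapEquiv, H_mapEquiv, ← H_mapEquiv P e fun ω => (f ω, g ω)]
  rfl

lemma Edist_mapEquiv {A : Type*} [DecidableEq A] (f g : Ω → A) :
    Edist (P.mapEquiv e) (f ∘ e.symm) (g ∘ e.symm) = Edist P f g :=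
  e.symm.sum_comp fun ω => P.μ ω * if f ω = g ω then 0 else 1

end Transfer

lemma IsScalableCode.mapEquiv {Ω' : Type*} [Fintype Ω'] {P : FinProb Ω} {X X1 : Ω → Fin 2}
    {B : Type*} [Fintype B] [DecidableEq B] {X2 : Ω → B} {g2 : Fin 2 → B → Fin 2}
    {D1 D12 : ℝ} (e : Ω ≃ Ω') (hc : IsScalableCode P X X1 X2 g2 D1 D12) :
    IsScalableCode (P.mapEquiv e) (X ∘ e.symm) (X1 ∘ e.symm) (X2 ∘ e.symm) g2 D1 D12 where
  uniform x := (pr_mapEquiv P e X x).trans (hc.uniform x)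
  indep a b := (pr_mapEquiv P e (fun ω => (X1 ω, X2 ω)) (a, b)).trans
    ((hc.indep a b).trans (by rw [pr_mapEquiv, pr_mapEquiv]))
  mi_fst := (MI_mapEquiv P e X X1).trans hc.mi_fst
  mi_pair := (MI_mapEquiv P e X fun ω => (X1 ω, X2 ω)).trans hc.mi_pair
  edist_fst := (Edist_mapEquiv P e X X1).trans_le hc.edist_fst
  edist_pair := (Edist_mapEquiv P e X fun ω => g2 (X1 ω) (X2 ω)).trans_le hc.edist_pair

def bsc (δ : ℝ) (x y : Fin 2) : ℝ := if x = y then 1 - δ else δ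

lemma sum_bsc (δ : ℝ) (y : Fin 2) : ∑ x, bsc δ x y = 1 := by
  rw [sum_fin_two_eq_rev_add _ y, bsc, bsc, if_neg (fin_two_rev_ne y), if_pos rfl]; ring

def refineDecoder (x1 : Fin 2) (x2 : Fin 4) : Fin 2 := ![x1, x1, 0, 1] x2

def coarseDecoder : Fin 4 → Fin 2 := ![0, 1, 0, 1]

/-- `X1` and `X2` are independent with laws uniform and `![a, a, b, b] / 2`, and `X` is
`refineDecoder X1 X2` sent through a binary symmetric channel with crossover probability `δ`. -/
noncomputable def timeSharing (a b δ : ℝ) (ha : 0 ≤ a) (hb : 0 ≤ b) (hab : a + b = 1)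
    (hδ0 : 0 ≤ δ) (hδ1 : δ ≤ 1) : FinProb (Fin 2 × Fin 2 × Fin 4) where
  μ ω := ![a, a, b, b] ω.2.2 / 4 * bsc δ ω.1 (refineDecoder ω.2.1 ω.2.2)
  nonneg ω := by
    have hw : 0 ≤ ![a, a, b, b] ω.2.2 := by fin_cases ω <;> simp [ha, hb]
    have hbsc : 0 ≤ bsc δ ω.1 (refineDecoder ω.2.1 ω.2.2) := by
      unfold bsc; split_ifs <;> linarith
    positivity
  sum_one := by
    rw [Fintype.sum_prod_type, Finset.sum_comm]
    simp only [← Finset.mul_sum, sum_bsc, mul_one, Fintype.sum_prod_type, Fin.sum_univ_four,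
      Finset.sum_const, Finset.card_univ, Fintype.card_fin]
    simp
    linarith

section Construction

variable {a b δ : ℝ} (ha : 0 ≤ a) (hb : 0 ≤ b) (hab : a + b = 1) (hδ0 : 0 ≤ δ)
  (hδ1 : δ ≤ 1)

local notation "P₀" => timeSharing a b δ ha hb hab hδ0 hδ1

lemma pr_timeSharing_fst (x : Fin 2) : pr P₀ (fun ω => ω.1) x = 1 / 2 := by
  fin_cases x <;>
    simp [pr, Fintype.sum_prod_type, Fin.sum_univ_two, Fin.sum_univ_four, timeSharing, bsc,
      refineDecoder] <;> linarith

lemma pr_timeSharing_snd (w : Fin 2 × Fin 4) :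
    pr P₀ (fun ω => (ω.2.1, ω.2.2)) w = ![a, a, b, b] w.2 / 4 := by
  obtain ⟨x1, x2⟩ := w
  fin_cases x1 <;> fin_cases x2 <;>
    simp [pr, Fintype.sum_prod_type, Fin.sum_univ_two, timeSharing, bsc, refineDecoder] <;> ring

lemma pr_timeSharing_snd_fst (x1 : Fin 2) : pr P₀ (fun ω => ω.2.1) x1 = 1 / 2 := by
  rw [← sum_pr_pair_snd _ _ (fun ω => ω.2.2)]
  simp only [pr_timeSharing_snd, Fin.sum_univ_four]
  simp
  linarith

lemma pr_timeSharing_snd_snd (x2 : Fin 4) :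
    pr P₀ (fun ω => ω.2.2) x2 = ![a, a, b, b] x2 / 2 := by
  rw [← sum_pr_pair_fst _ (fun ω => ω.2.1), Fin.sum_univ_two, pr_timeSharing_snd,
    pr_timeSharing_snd]
  ring

lemma pr_timeSharing_rev_refineDecoder (w : Fin 2 × Fin 4) :
    pr P₀ (fun ω => (ω.1, ω.2.1, ω.2.2)) ((refineDecoder w.1 w.2).rev, w)
      = δ * (![a, a, b, b] w.2 / 4) := by
  obtain ⟨x1, x2⟩ := w
  fin_cases x1 <;> fin_cases x2 <;>
    simp [pr, timeSharing, bsc, refineDecoder] <;> ring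

lemma pr_timeSharing_rev_fst_snd (x1 : Fin 2) :
    pr P₀ (fun ω => (ω.1, ω.2.1)) (x1.rev, x1) = (a * δ + b / 2) / 2 := by
  fin_cases x1 <;>
    simp [pr, Fintype.sum_prod_type, Fin.sum_univ_two, Fin.sum_univ_four, timeSharing, bsc,
      refineDecoder] <;> ring

lemma edist_timeSharing_fst_snd :
    Edist P₀ (fun ω => ω.1) (fun ω => ω.2.1) = a * δ + b / 2 := by
  simp [Edist, Fintype.sum_prod_type, Fin.sum_univ_two, Fin.sum_univ_four, timeSharing, bsc,
    refineDecoder]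
  ring

lemma edist_timeSharing_refineDecoder :
    Edist P₀ (fun ω => ω.1) (fun ω => refineDecoder ω.2.1 ω.2.2) = δ := by
  simp [Edist, Fintype.sum_prod_type, Fin.sum_univ_two, Fin.sum_univ_four, timeSharing, bsc,
    refineDecoder]
  linear_combination δ * hab

lemma edist_timeSharing_coarseDecoder :
    Edist P₀ (fun ω => ω.1) (fun ω => coarseDecoder ω.2.2) = a / 2 + b * δ := by
  simp [Edist, Fintype.sum_prod_type, Fin.sum_univ_two, Fin.sum_univ_four, timeSharing, bsc,
    refineDecoder, coarseDecoder]
  ring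

theorem isScalableCode_timeSharing {D1 : ℝ} (hD1 : a * δ + b / 2 = D1) :
    IsScalableCode P₀ (fun ω => ω.1) (fun ω => ω.2.1) (fun ω => ω.2.2) refineDecoder D1 δ
    where
  uniform := pr_timeSharing_fst ha hb hab hδ0 hδ1
  indep x1 x2 := by
    rw [pr_timeSharing_snd, pr_timeSharing_snd_fst, pr_timeSharing_snd_snd]; ring
  mi_fst := by
    rw [MI_eq_H_sub_Hcond, H_eq_one_of_uniform _ (pr_timeSharing_fst ha hb hab hδ0 hδ1),
      Hcond_eq_Hb_of_pr_pair_rev_eq (k := id) (t := D1)]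
    intro x1
    rw [id, pr_timeSharing_rev_fst_snd, pr_timeSharing_snd_fst, ← hD1]; ring
  mi_pair := by
    rw [MI_eq_H_sub_Hcond, H_eq_one_of_uniform _ (pr_timeSharing_fst ha hb hab hδ0 hδ1),
      Hcond_eq_Hb_of_pr_pair_rev_eq (k := fun w => refineDecoder w.1 w.2) (t := δ)]
    intro w
    rw [pr_timeSharing_rev_refineDecoder, pr_timeSharing_snd]
  edist_fst := (edist_timeSharing_fst_snd ha hb hab hδ0 hδ1).trans_le hD1.le
  edist_pair := (edist_timeSharing_refineDecoder ha hb hab hδ0 hδ1).le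

end Construction

end MDC

open MDC
/-- Theorem 5: for a binary symmetric source with Hamming distortion,
D*₂(D₁, D₁₂) = 1/2 + D₁₂ − D₁. -/
theorem stmt14 (D1 D12 : ℝ) (h0 : 0 ≤ D12) (h1 : D12 ≤ D1) (h2 : D1 ≤ 1/2) :
    IsLeast {e : ℝ | ∃ (n m : ℕ) (P : FinProb (Fin n)) (X X1 : Fin n → Fin 2)
        (X2 : Fin n → Fin m) (g1 : Fin m → Fin 2) (g2 : Fin 2 → Fin m → Fin 2),
      (∀ x, pr P X x = 1/2) ∧
      Indep P X1 X2 ∧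
      MI P X X1 = 1 - Hb D1 ∧
      MI P X (fun ω => (X1 ω, X2 ω)) = 1 - Hb D12 ∧
      Edist P X X1 ≤ D1 ∧
      Edist P X (fun ω => g2 (X1 ω) (X2 ω)) ≤ D12 ∧
      e = Edist P X (fun ω => g1 (X2 ω))}
    (1/2 + D12 - D1) := by
  constructor
  · obtain ⟨a, b, ha, hb, hab, hD1⟩ := Icc_subset_segment (𝕜 := ℝ) ⟨h1, h2⟩
    simp only [smul_eq_mul] at hD1
    have hδ1 : D12 ≤ 1 := by linarith
    set enum := Fintype.equivFin (Fin 2 × Fin 2 × Fin 4)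
    have hc := (isScalableCode_timeSharing ha hb hab h0 hδ1
      (by linarith : a * D12 + b / 2 = D1)).mapEquiv enum
    refine ⟨_, 4, _, _, _, _, coarseDecoder, refineDecoder, hc.uniform, hc.indep, hc.mi_fst,
      hc.mi_pair, hc.edist_fst, hc.edist_pair, ?_⟩
    calc 1 / 2 + D12 - D1 = a / 2 + b * D12 := by linear_combination -(1 / 2 + D12) * hab + hD1
      _ = _ := (edist_timeSharing_coarseDecoder ha hb hab h0 hδ1).symm
      _ = _ := (Edist_mapEquiv _ enum (fun ω => ω.1) fun ω => coarseDecoder ω.2.2).symm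
  · rintro e ⟨n, m, P, X, X1, X2, g1, g2, hX, hind, hmi1, hmi2, hd1, hd12, rfl⟩
    exact IsScalableCode.le_edist ⟨hX, hind, hmi1, hmi2, hd1, hd12⟩ g1 h0 h1 h2
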